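/- Let v₁,...,v₄ be the vertices of a truncated hyperideal anti-de Sitter tetrahedron, let G be the 4×4 matrix with entries ⟨vᵢ,vⱼ⟩ and C_{ij} its (i,j)-cofactors. Then for every pair i ≠ j one has C_{ij}² > C_{ii}·C_{jj}; equivalently, the outward unit normal vectors satisfy either ⟨uᵢ,uⱼ⟩ < −1 or ⟨uᵢ,uⱼ⟩ > 1 for every i ≠ j. -/

import Mathlib

noncomputable section

/-- The symmetric bilinear form of signature (2,2) on ℝ⁴ (the Lorentzian space E^{2,2}). -/
def bil (x y : Fin 4 → ℝ) : ℝ := x 0 * y 0 + x 1 * y 1 - x 2 * y 2 - x 3 * y 3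

/-- The vertices of a truncated hyperideal anti-de Sitter tetrahedron: four linearly independent
unit vectors such that each straight segment between two of them meets B^{2,2}. -/
def IsAdSTetra (v : Fin 4 → (Fin 4 → ℝ)) : Prop :=
  LinearIndependent ℝ v ∧ (∀ i, bil (v i) (v i) = 1) ∧
  ∀ i j, i ≠ j → ∃ t ∈ Set.Icc (0 : ℝ) 1,
    bil (t • v i + (1 - t) • v j) (t • v i + (1 - t) • v j) < 0

/-- u₁,...,u₄ are the outward unit normal vectors of the tetrahedron with vertices v₁,...,v₄. -/
def IsOutwardNormal (v u : Fin 4 → (Fin 4 → ℝ)) : Prop :=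
  ∀ i, 0 < bil (u i) (v i) ∧ |bil (u i) (u i)| = 1 ∧ ∀ j, j ≠ i → bil (u i) (v j) = 0

open Matrix

lemma adjE (A : Matrix (Fin 4) (Fin 4) ℝ) (i j : Fin 4) :
    A.adjugate i j = (-1)^((j:ℕ)+(i:ℕ)) * (A.submatrix (Fin.succAbove j) (Fin.succAbove i)).det :=
  Matrix.adjugate_fin_succ_eq_det_submatrix (n := 3) A i j

lemma adj00 (A : Matrix (Fin 4) (Fin 4) ℝ) : A.adjugate 0 0 = A 1 1 * A 2 2 * A 3 3 - A 1 1 * A 2 3 * A 3 2 - A 1 2 * A 2 1 * A 3 3 + A 1 2 * A 2 3 * A 3 1 + A 1 3 * A 2 1 * A 3 2 - A 1 3 * A 2 2 * A 3 1 := by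
  rw [adjE]
  simp [Matrix.det_fin_three, Fin.succAbove, Fin.lt_def,
    show (Fin.succ 0 : Fin 4) = 1 from rfl, show (Fin.succ 1 : Fin 4) = 2 from rfl,
    show (Fin.succ 2 : Fin 4) = 3 from rfl, show (Fin.castSucc 2 : Fin 4) = 2 from rfl,
    show (Fin.castSucc 1 : Fin 4) = 1 from rfl, show (Fin.castSucc 0 : Fin 4) = 0 from rfl,
    show ((3 : Fin 4) : ℕ) = 3 from rfl, show ((2 : Fin 4) : ℕ) = 2 from rfl,
    show ((1 : Fin 4) : ℕ) = 1 from rfl, show ((0 : Fin 4) : ℕ) = 0 from rfl]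
  all_goals ring

lemma adj01 (A : Matrix (Fin 4) (Fin 4) ℝ) : A.adjugate 0 1 = -A 0 1 * A 2 2 * A 3 3 + A 0 1 * A 2 3 * A 3 2 + A 0 2 * A 2 1 * A 3 3 - A 0 2 * A 2 3 * A 3 1 - A 0 3 * A 2 1 * A 3 2 + A 0 3 * A 2 2 * A 3 1 := by
  rw [adjE]
  simp [Matrix.det_fin_three, Fin.succAbove, Fin.lt_def,
    show (Fin.succ 0 : Fin 4) = 1 from rfl, show (Fin.succ 1 : Fin 4) = 2 from rfl,
    show (Fin.succ 2 : Fin 4) = 3 from rfl, show (Fin.castSucc 2 : Fin 4) = 2 from rfl,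
    show (Fin.castSucc 1 : Fin 4) = 1 from rfl, show (Fin.castSucc 0 : Fin 4) = 0 from rfl,
    show ((3 : Fin 4) : ℕ) = 3 from rfl, show ((2 : Fin 4) : ℕ) = 2 from rfl,
    show ((1 : Fin 4) : ℕ) = 1 from rfl, show ((0 : Fin 4) : ℕ) = 0 from rfl]
  all_goals ring

lemma adj02 (A : Matrix (Fin 4) (Fin 4) ℝ) : A.adjugate 0 2 = A 0 1 * A 1 2 * A 3 3 - A 0 1 * A 1 3 * A 3 2 - A 0 2 * A 1 1 * A 3 3 + A 0 2 * A 1 3 * A 3 1 + A 0 3 * A 1 1 * A 3 2 - A 0 3 * A 1 2 * A 3 1 := by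
  rw [adjE]
  simp [Matrix.det_fin_three, Fin.succAbove, Fin.lt_def,
    show (Fin.succ 0 : Fin 4) = 1 from rfl, show (Fin.succ 1 : Fin 4) = 2 from rfl,
    show (Fin.succ 2 : Fin 4) = 3 from rfl, show (Fin.castSucc 2 : Fin 4) = 2 from rfl,
    show (Fin.castSucc 1 : Fin 4) = 1 from rfl, show (Fin.castSucc 0 : Fin 4) = 0 from rfl,
    show ((3 : Fin 4) : ℕ) = 3 from rfl, show ((2 : Fin 4) : ℕ) = 2 from rfl,
    show ((1 : Fin 4) : ℕ) = 1 from rfl, show ((0 : Fin 4) : ℕ) = 0 from rfl]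
  all_goals ring

lemma adj03 (A : Matrix (Fin 4) (Fin 4) ℝ) : A.adjugate 0 3 = -A 0 1 * A 1 2 * A 2 3 + A 0 1 * A 1 3 * A 2 2 + A 0 2 * A 1 1 * A 2 3 - A 0 2 * A 1 3 * A 2 1 - A 0 3 * A 1 1 * A 2 2 + A 0 3 * A 1 2 * A 2 1 := by
  rw [adjE]
  simp [Matrix.det_fin_three, Fin.succAbove, Fin.lt_def,
    show (Fin.succ 0 : Fin 4) = 1 from rfl, show (Fin.succ 1 : Fin 4) = 2 from rfl,
    show (Fin.succ 2 : Fin 4) = 3 from rfl, show (Fin.castSucc 2 : Fin 4) = 2 from rfl,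
    show (Fin.castSucc 1 : Fin 4) = 1 from rfl, show (Fin.castSucc 0 : Fin 4) = 0 from rfl,
    show ((3 : Fin 4) : ℕ) = 3 from rfl, show ((2 : Fin 4) : ℕ) = 2 from rfl,
    show ((1 : Fin 4) : ℕ) = 1 from rfl, show ((0 : Fin 4) : ℕ) = 0 from rfl]
  all_goals ring

lemma adj10 (A : Matrix (Fin 4) (Fin 4) ℝ) : A.adjugate 1 0 = -A 1 0 * A 2 2 * A 3 3 + A 1 0 * A 2 3 * A 3 2 + A 1 2 * A 2 0 * A 3 3 - A 1 2 * A 2 3 * A 3 0 - A 1 3 * A 2 0 * A 3 2 + A 1 3 * A 2 2 * A 3 0 := by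
  rw [adjE]
  simp [Matrix.det_fin_three, Fin.succAbove, Fin.lt_def,
    show (Fin.succ 0 : Fin 4) = 1 from rfl, show (Fin.succ 1 : Fin 4) = 2 from rfl,
    show (Fin.succ 2 : Fin 4) = 3 from rfl, show (Fin.castSucc 2 : Fin 4) = 2 from rfl,
    show (Fin.castSucc 1 : Fin 4) = 1 from rfl, show (Fin.castSucc 0 : Fin 4) = 0 from rfl,
    show ((3 : Fin 4) : ℕ) = 3 from rfl, show ((2 : Fin 4) : ℕ) = 2 from rfl,
    show ((1 : Fin 4) : ℕ) = 1 from rfl, show ((0 : Fin 4) : ℕ) = 0 from rfl]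
  all_goals ring

lemma adj11 (A : Matrix (Fin 4) (Fin 4) ℝ) : A.adjugate 1 1 = A 0 0 * A 2 2 * A 3 3 - A 0 0 * A 2 3 * A 3 2 - A 0 2 * A 2 0 * A 3 3 + A 0 2 * A 2 3 * A 3 0 + A 0 3 * A 2 0 * A 3 2 - A 0 3 * A 2 2 * A 3 0 := by
  rw [adjE]
  simp [Matrix.det_fin_three, Fin.succAbove, Fin.lt_def,
    show (Fin.succ 0 : Fin 4) = 1 from rfl, show (Fin.succ 1 : Fin 4) = 2 from rfl,
    show (Fin.succ 2 : Fin 4) = 3 from rfl, show (Fin.castSucc 2 : Fin 4) = 2 from rfl,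
    show (Fin.castSucc 1 : Fin 4) = 1 from rfl, show (Fin.castSucc 0 : Fin 4) = 0 from rfl,
    show ((3 : Fin 4) : ℕ) = 3 from rfl, show ((2 : Fin 4) : ℕ) = 2 from rfl,
    show ((1 : Fin 4) : ℕ) = 1 from rfl, show ((0 : Fin 4) : ℕ) = 0 from rfl]
  all_goals ring

lemma adj12 (A : Matrix (Fin 4) (Fin 4) ℝ) : A.adjugate 1 2 = -A 0 0 * A 1 2 * A 3 3 + A 0 0 * A 1 3 * A 3 2 + A 0 2 * A 1 0 * A 3 3 - A 0 2 * A 1 3 * A 3 0 - A 0 3 * A 1 0 * A 3 2 + A 0 3 * A 1 2 * A 3 0 := by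
  rw [adjE]
  simp [Matrix.det_fin_three, Fin.succAbove, Fin.lt_def,
    show (Fin.succ 0 : Fin 4) = 1 from rfl, show (Fin.succ 1 : Fin 4) = 2 from rfl,
    show (Fin.succ 2 : Fin 4) = 3 from rfl, show (Fin.castSucc 2 : Fin 4) = 2 from rfl,
    show (Fin.castSucc 1 : Fin 4) = 1 from rfl, show (Fin.castSucc 0 : Fin 4) = 0 from rfl,
    show ((3 : Fin 4) : ℕ) = 3 from rfl, show ((2 : Fin 4) : ℕ) = 2 from rfl,
    show ((1 : Fin 4) : ℕ) = 1 from rfl, show ((0 : Fin 4) : ℕ) = 0 from rfl]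
  all_goals ring

lemma adj13 (A : Matrix (Fin 4) (Fin 4) ℝ) : A.adjugate 1 3 = A 0 0 * A 1 2 * A 2 3 - A 0 0 * A 1 3 * A 2 2 - A 0 2 * A 1 0 * A 2 3 + A 0 2 * A 1 3 * A 2 0 + A 0 3 * A 1 0 * A 2 2 - A 0 3 * A 1 2 * A 2 0 := by
  rw [adjE]
  simp [Matrix.det_fin_three, Fin.succAbove, Fin.lt_def,
    show (Fin.succ 0 : Fin 4) = 1 from rfl, show (Fin.succ 1 : Fin 4) = 2 from rfl,
    show (Fin.succ 2 : Fin 4) = 3 from rfl, show (Fin.castSucc 2 : Fin 4) = 2 from rfl,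
    show (Fin.castSucc 1 : Fin 4) = 1 from rfl, show (Fin.castSucc 0 : Fin 4) = 0 from rfl,
    show ((3 : Fin 4) : ℕ) = 3 from rfl, show ((2 : Fin 4) : ℕ) = 2 from rfl,
    show ((1 : Fin 4) : ℕ) = 1 from rfl, show ((0 : Fin 4) : ℕ) = 0 from rfl]
  all_goals ring

lemma adj20 (A : Matrix (Fin 4) (Fin 4) ℝ) : A.adjugate 2 0 = A 1 0 * A 2 1 * A 3 3 - A 1 0 * A 2 3 * A 3 1 - A 1 1 * A 2 0 * A 3 3 + A 1 1 * A 2 3 * A 3 0 + A 1 3 * A 2 0 * A 3 1 - A 1 3 * A 2 1 * A 3 0 := by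
  rw [adjE]
  simp [Matrix.det_fin_three, Fin.succAbove, Fin.lt_def,
    show (Fin.succ 0 : Fin 4) = 1 from rfl, show (Fin.succ 1 : Fin 4) = 2 from rfl,
    show (Fin.succ 2 : Fin 4) = 3 from rfl, show (Fin.castSucc 2 : Fin 4) = 2 from rfl,
    show (Fin.castSucc 1 : Fin 4) = 1 from rfl, show (Fin.castSucc 0 : Fin 4) = 0 from rfl,
    show ((3 : Fin 4) : ℕ) = 3 from rfl, show ((2 : Fin 4) : ℕ) = 2 from rfl,
    show ((1 : Fin 4) : ℕ) = 1 from rfl, show ((0 : Fin 4) : ℕ) = 0 from rfl]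
  all_goals ring

lemma adj21 (A : Matrix (Fin 4) (Fin 4) ℝ) : A.adjugate 2 1 = -A 0 0 * A 2 1 * A 3 3 + A 0 0 * A 2 3 * A 3 1 + A 0 1 * A 2 0 * A 3 3 - A 0 1 * A 2 3 * A 3 0 - A 0 3 * A 2 0 * A 3 1 + A 0 3 * A 2 1 * A 3 0 := by
  rw [adjE]
  simp [Matrix.det_fin_three, Fin.succAbove, Fin.lt_def,
    show (Fin.succ 0 : Fin 4) = 1 from rfl, show (Fin.succ 1 : Fin 4) = 2 from rfl,
    show (Fin.succ 2 : Fin 4) = 3 from rfl, show (Fin.castSucc 2 : Fin 4) = 2 from rfl,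
    show (Fin.castSucc 1 : Fin 4) = 1 from rfl, show (Fin.castSucc 0 : Fin 4) = 0 from rfl,
    show ((3 : Fin 4) : ℕ) = 3 from rfl, show ((2 : Fin 4) : ℕ) = 2 from rfl,
    show ((1 : Fin 4) : ℕ) = 1 from rfl, show ((0 : Fin 4) : ℕ) = 0 from rfl]
  all_goals ring

lemma adj22 (A : Matrix (Fin 4) (Fin 4) ℝ) : A.adjugate 2 2 = A 0 0 * A 1 1 * A 3 3 - A 0 0 * A 1 3 * A 3 1 - A 0 1 * A 1 0 * A 3 3 + A 0 1 * A 1 3 * A 3 0 + A 0 3 * A 1 0 * A 3 1 - A 0 3 * A 1 1 * A 3 0 := by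
  rw [adjE]
  simp [Matrix.det_fin_three, Fin.succAbove, Fin.lt_def,
    show (Fin.succ 0 : Fin 4) = 1 from rfl, show (Fin.succ 1 : Fin 4) = 2 from rfl,
    show (Fin.succ 2 : Fin 4) = 3 from rfl, show (Fin.castSucc 2 : Fin 4) = 2 from rfl,
    show (Fin.castSucc 1 : Fin 4) = 1 from rfl, show (Fin.castSucc 0 : Fin 4) = 0 from rfl,
    show ((3 : Fin 4) : ℕ) = 3 from rfl, show ((2 : Fin 4) : ℕ) = 2 from rfl,
    show ((1 : Fin 4) : ℕ) = 1 from rfl, show ((0 : Fin 4) : ℕ) = 0 from rfl]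
  all_goals ring

lemma adj23 (A : Matrix (Fin 4) (Fin 4) ℝ) : A.adjugate 2 3 = -A 0 0 * A 1 1 * A 2 3 + A 0 0 * A 1 3 * A 2 1 + A 0 1 * A 1 0 * A 2 3 - A 0 1 * A 1 3 * A 2 0 - A 0 3 * A 1 0 * A 2 1 + A 0 3 * A 1 1 * A 2 0 := by
  rw [adjE]
  simp [Matrix.det_fin_three, Fin.succAbove, Fin.lt_def,
    show (Fin.succ 0 : Fin 4) = 1 from rfl, show (Fin.succ 1 : Fin 4) = 2 from rfl,
    show (Fin.succ 2 : Fin 4) = 3 from rfl, show (Fin.castSucc 2 : Fin 4) = 2 from rfl,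
    show (Fin.castSucc 1 : Fin 4) = 1 from rfl, show (Fin.castSucc 0 : Fin 4) = 0 from rfl,
    show ((3 : Fin 4) : ℕ) = 3 from rfl, show ((2 : Fin 4) : ℕ) = 2 from rfl,
    show ((1 : Fin 4) : ℕ) = 1 from rfl, show ((0 : Fin 4) : ℕ) = 0 from rfl]
  all_goals ring

lemma adj30 (A : Matrix (Fin 4) (Fin 4) ℝ) : A.adjugate 3 0 = -A 1 0 * A 2 1 * A 3 2 + A 1 0 * A 2 2 * A 3 1 + A 1 1 * A 2 0 * A 3 2 - A 1 1 * A 2 2 * A 3 0 - A 1 2 * A 2 0 * A 3 1 + A 1 2 * A 2 1 * A 3 0 := by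
  rw [adjE]
  simp [Matrix.det_fin_three, Fin.succAbove, Fin.lt_def,
    show (Fin.succ 0 : Fin 4) = 1 from rfl, show (Fin.succ 1 : Fin 4) = 2 from rfl,
    show (Fin.succ 2 : Fin 4) = 3 from rfl, show (Fin.castSucc 2 : Fin 4) = 2 from rfl,
    show (Fin.castSucc 1 : Fin 4) = 1 from rfl, show (Fin.castSucc 0 : Fin 4) = 0 from rfl,
    show ((3 : Fin 4) : ℕ) = 3 from rfl, show ((2 : Fin 4) : ℕ) = 2 from rfl,
    show ((1 : Fin 4) : ℕ) = 1 from rfl, show ((0 : Fin 4) : ℕ) = 0 from rfl]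
  all_goals ring

lemma adj31 (A : Matrix (Fin 4) (Fin 4) ℝ) : A.adjugate 3 1 = A 0 0 * A 2 1 * A 3 2 - A 0 0 * A 2 2 * A 3 1 - A 0 1 * A 2 0 * A 3 2 + A 0 1 * A 2 2 * A 3 0 + A 0 2 * A 2 0 * A 3 1 - A 0 2 * A 2 1 * A 3 0 := by
  rw [adjE]
  simp [Matrix.det_fin_three, Fin.succAbove, Fin.lt_def,
    show (Fin.succ 0 : Fin 4) = 1 from rfl, show (Fin.succ 1 : Fin 4) = 2 from rfl,
    show (Fin.succ 2 : Fin 4) = 3 from rfl, show (Fin.castSucc 2 : Fin 4) = 2 from rfl,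
    show (Fin.castSucc 1 : Fin 4) = 1 from rfl, show (Fin.castSucc 0 : Fin 4) = 0 from rfl,
    show ((3 : Fin 4) : ℕ) = 3 from rfl, show ((2 : Fin 4) : ℕ) = 2 from rfl,
    show ((1 : Fin 4) : ℕ) = 1 from rfl, show ((0 : Fin 4) : ℕ) = 0 from rfl]
  all_goals ring

lemma adj32 (A : Matrix (Fin 4) (Fin 4) ℝ) : A.adjugate 3 2 = -A 0 0 * A 1 1 * A 3 2 + A 0 0 * A 1 2 * A 3 1 + A 0 1 * A 1 0 * A 3 2 - A 0 1 * A 1 2 * A 3 0 - A 0 2 * A 1 0 * A 3 1 + A 0 2 * A 1 1 * A 3 0 := by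
  rw [adjE]
  simp [Matrix.det_fin_three, Fin.succAbove, Fin.lt_def,
    show (Fin.succ 0 : Fin 4) = 1 from rfl, show (Fin.succ 1 : Fin 4) = 2 from rfl,
    show (Fin.succ 2 : Fin 4) = 3 from rfl, show (Fin.castSucc 2 : Fin 4) = 2 from rfl,
    show (Fin.castSucc 1 : Fin 4) = 1 from rfl, show (Fin.castSucc 0 : Fin 4) = 0 from rfl,
    show ((3 : Fin 4) : ℕ) = 3 from rfl, show ((2 : Fin 4) : ℕ) = 2 from rfl,
    show ((1 : Fin 4) : ℕ) = 1 from rfl, show ((0 : Fin 4) : ℕ) = 0 from rfl]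
  all_goals ring

lemma adj33 (A : Matrix (Fin 4) (Fin 4) ℝ) : A.adjugate 3 3 = A 0 0 * A 1 1 * A 2 2 - A 0 0 * A 1 2 * A 2 1 - A 0 1 * A 1 0 * A 2 2 + A 0 1 * A 1 2 * A 2 0 + A 0 2 * A 1 0 * A 2 1 - A 0 2 * A 1 1 * A 2 0 := by
  rw [adjE]
  simp [Matrix.det_fin_three, Fin.succAbove, Fin.lt_def,
    show (Fin.succ 0 : Fin 4) = 1 from rfl, show (Fin.succ 1 : Fin 4) = 2 from rfl,
    show (Fin.succ 2 : Fin 4) = 3 from rfl, show (Fin.castSucc 2 : Fin 4) = 2 from rfl,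
    show (Fin.castSucc 1 : Fin 4) = 1 from rfl, show (Fin.castSucc 0 : Fin 4) = 0 from rfl,
    show ((3 : Fin 4) : ℕ) = 3 from rfl, show ((2 : Fin 4) : ℕ) = 2 from rfl,
    show ((1 : Fin 4) : ℕ) = 1 from rfl, show ((0 : Fin 4) : ℕ) = 0 from rfl]
  all_goals ring

lemma det4 (A : Matrix (Fin 4) (Fin 4) ℝ) : A.det = A 0 0 * A 1 1 * A 2 2 * A 3 3 - A 0 0 * A 1 1 * A 2 3 * A 3 2 - A 0 0 * A 1 2 * A 2 1 * A 3 3 + A 0 0 * A 1 2 * A 2 3 * A 3 1 + A 0 0 * A 1 3 * A 2 1 * A 3 2 - A 0 0 * A 1 3 * A 2 2 * A 3 1 - A 0 1 * A 1 0 * A 2 2 * A 3 3 + A 0 1 * A 1 0 * A 2 3 * A 3 2 + A 0 1 * A 1 2 * A 2 0 * A 3 3 - A 0 1 * A 1 2 * A 2 3 * A 3 0 - A 0 1 * A 1 3 * A 2 0 * A 3 2 + A 0 1 * A 1 3 * A 2 2 * A 3 0 + A 0 2 * A 1 0 * A 2 1 * A 3 3 - A 0 2 * A 1 0 * A 2 3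 * A 3 1 - A 0 2 * A 1 1 * A 2 0 * A 3 3 + A 0 2 * A 1 1 * A 2 3 * A 3 0 + A 0 2 * A 1 3 * A 2 0 * A 3 1 - A 0 2 * A 1 3 * A 2 1 * A 3 0 - A 0 3 * A 1 0 * A 2 1 * A 3 2 + A 0 3 * A 1 0 * A 2 2 * A 3 1 + A 0 3 * A 1 1 * A 2 0 * A 3 2 - A 0 3 * A 1 1 * A 2 2 * A 3 0 - A 0 3 * A 1 2 * A 2 0 * A 3 1 + A 0 3 * A 1 2 * A 2 1 * A 3 0 := by
  rw [Matrix.det_succ_row_zero, Fin.sum_univ_four]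
  simp [Matrix.det_fin_three, Fin.succAbove, Fin.lt_def,
    show (Fin.succ 0 : Fin 4) = 1 from rfl, show (Fin.succ 1 : Fin 4) = 2 from rfl,
    show (Fin.succ 2 : Fin 4) = 3 from rfl, show (Fin.castSucc 2 : Fin 4) = 2 from rfl,
    show (Fin.castSucc 1 : Fin 4) = 1 from rfl, show (Fin.castSucc 0 : Fin 4) = 0 from rfl,
    show ((3 : Fin 4) : ℕ) = 3 from rfl, show ((2 : Fin 4) : ℕ) = 2 from rfl,
    show ((1 : Fin 4) : ℕ) = 1 from rfl, show ((0 : Fin 4) : ℕ) = 0 from rfl]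
  all_goals ring

lemma jac01 (A : Matrix (Fin 4) (Fin 4) ℝ) :
    A.adjugate 0 0 * A.adjugate 1 1 - A.adjugate 0 1 * A.adjugate 1 0
      = A.det * (A 2 2 * A 3 3 - A 2 3 * A 3 2) := by
  rw [adj00, adj11, adj01, adj10, det4]
  ring

lemma jac02 (A : Matrix (Fin 4) (Fin 4) ℝ) :
    A.adjugate 0 0 * A.adjugate 2 2 - A.adjugate 0 2 * A.adjugate 2 0
      = A.det * (A 1 1 * A 3 3 - A 1 3 * A 3 1) := by
  rw [adj00, adj22, adj02, adj20, det4]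
  ring

lemma jac03 (A : Matrix (Fin 4) (Fin 4) ℝ) :
    A.adjugate 0 0 * A.adjugate 3 3 - A.adjugate 0 3 * A.adjugate 3 0
      = A.det * (A 1 1 * A 2 2 - A 1 2 * A 2 1) := by
  rw [adj00, adj33, adj03, adj30, det4]
  ring

lemma jac12 (A : Matrix (Fin 4) (Fin 4) ℝ) :
    A.adjugate 1 1 * A.adjugate 2 2 - A.adjugate 1 2 * A.adjugate 2 1
      = A.det * (A 0 0 * A 3 3 - A 0 3 * A 3 0) := by
  rw [adj11, adj22, adj12, adj21, det4]
  ring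

lemma jac13 (A : Matrix (Fin 4) (Fin 4) ℝ) :
    A.adjugate 1 1 * A.adjugate 3 3 - A.adjugate 1 3 * A.adjugate 3 1
      = A.det * (A 0 0 * A 2 2 - A 0 2 * A 2 0) := by
  rw [adj11, adj33, adj13, adj31, det4]
  ring

lemma jac23 (A : Matrix (Fin 4) (Fin 4) ℝ) :
    A.adjugate 2 2 * A.adjugate 3 3 - A.adjugate 2 3 * A.adjugate 3 2
      = A.det * (A 0 0 * A 1 1 - A 0 1 * A 1 0) := by
  rw [adj22, adj33, adj23, adj32, det4]
  ring

lemma bil_symm (x y : Fin 4 → ℝ) : bil x y = bil y x := by unfold bil; ring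


set_option maxHeartbeats 1000000 in
/-- For a truncated hyperideal anti-de Sitter tetrahedron, C_{ij}² > C_{ii}C_{jj} for i ≠ j;
equivalently, the outward unit normals satisfy ⟨uᵢ,uⱼ⟩ < −1 or ⟨uᵢ,uⱼ⟩ > 1 for i ≠ j. -/
theorem stmt5 (v : Fin 4 → (Fin 4 → ℝ)) (hv : IsAdSTetra v)
    (G : Matrix (Fin 4) (Fin 4) ℝ) (hG : ∀ i j, G i j = bil (v i) (v j))
    (C : Fin 4 → Fin 4 → ℝ) (hC : ∀ i j, C i j = G.adjugate j i) :
    (∀ i j, i ≠ j → C i i * C j j < C i j ^ 2) ∧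
    (∀ u : Fin 4 → (Fin 4 → ℝ), IsOutwardNormal v u →
      ∀ i j, i ≠ j → bil (u i) (u j) < -1 ∨ 1 < bil (u i) (u j)) := by
  obtain ⟨hli, hunit, hseg⟩ := hv
  have hdiagG : ∀ i, G i i = 1 := fun i => by rw [hG]; exact hunit i
  have hGsym : ∀ a b, G a b = G b a := fun a b => by rw [hG, hG, bil_symm]
  have hoff : ∀ i j, i ≠ j → G i j < -1 := by
    intro i j hij
    obtain ⟨t, ⟨ht0, ht1⟩, hneg⟩ := hseg i j hij
    have e : bil (t • v i + (1 - t) • v j) (t • v i + (1 - t) • v j)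
        = t ^ 2 * bil (v i) (v i) + 2 * (t * (1 - t)) * bil (v i) (v j)
          + (1 - t) ^ 2 * bil (v j) (v j) := by
      simp [bil, bil_symm]; ring
    rw [e, hunit i, hunit j] at hneg
    rw [hG]
    nlinarith [sq_nonneg (2 * t - 1), mul_nonneg ht0 (by linarith : (0:ℝ) ≤ 1 - t)]
  have hGT : Gᵀ = G := by ext a b; exact hGsym b a
  have hadj : ∀ a b, G.adjugate a b = G.adjugate b a := by
    intro a b
    have h := congrFun (congrFun (Matrix.adjugate_transpose G) a) b
    rw [hGT] at h
    exact h.symm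
  -- determinant is positive
  set J : Matrix (Fin 4) (Fin 4) ℝ := Matrix.diagonal ![1, 1, -1, -1] with hJ
  set V : Matrix (Fin 4) (Fin 4) ℝ := Matrix.of v with hV
  have hGVJV : G = V * J * Vᵀ := by
    ext a b
    rw [hG]
    simp [Matrix.mul_apply, hJ, hV, Matrix.diagonal, Fin.sum_univ_four, bil,
      Matrix.transpose_apply]
    ring
  have hdetV : V.det ≠ 0 := by
    intro h
    obtain ⟨c, hc0, hc⟩ := Matrix.exists_vecMul_eq_zero_iff.2 h
    have hzero : ∑ k, c k • v k = 0 := by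
      funext m
      have := congrFun hc m
      simpa [Matrix.vecMul, dotProduct, Fin.sum_univ_four, hV] using this
    exact hc0 (funext fun k => Fintype.linearIndependent_iff.1 hli c hzero k)
  have hdetJ : J.det = 1 := by
    rw [hJ, Matrix.det_diagonal, Fin.prod_univ_four]
    norm_num
    show (-1:ℝ) * -1 = 1
    norm_num
  have hdetG : 0 < G.det := by
    rw [hGVJV, Matrix.det_mul, Matrix.det_mul, hdetJ, Matrix.det_transpose, mul_one]
    exact lt_of_le_of_ne (mul_self_nonneg _) (Ne.symm (mul_ne_zero hdetV hdetV))
  -- part 1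
  have main : ∀ a b k l : Fin 4,
      (G.adjugate a a * G.adjugate b b - G.adjugate a b * G.adjugate b a
        = G.det * (G k k * G l l - G k l * G l k)) → k ≠ l →
      G.adjugate a a * G.adjugate b b < G.adjugate b a ^ 2 := by
    intro a b k l h hkl
    rw [hdiagG k, hdiagG l, hGsym l k, hadj a b] at h
    nlinarith [h, mul_pos hdetG (show (0:ℝ) < G k l ^ 2 - 1 by
      nlinarith [hoff k l hkl])]
  have part1 : ∀ i j, i ≠ j → C i i * C j j < C i j ^ 2 := by
    intro i j hij
    simp only [hC]
    fin_cases i <;> fin_cases j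
    · exact absurd rfl hij
    · exact main 0 1 2 3 (by linear_combination jac01 G) (by decide)
    · exact main 0 2 1 3 (by linear_combination jac02 G) (by decide)
    · exact main 0 3 1 2 (by linear_combination jac03 G) (by decide)
    · exact main 1 0 2 3 (by linear_combination jac01 G) (by decide)
    · exact absurd rfl hij
    · exact main 1 2 0 3 (by linear_combination jac12 G) (by decide)
    · exact main 1 3 0 2 (by linear_combination jac13 G) (by decide)
    · exact main 2 0 1 3 (by linear_combination jac02 G) (by decide)
    · exact main 2 1 0 3 (by linear_combination jac12 G) (by decide)
    · exact absurd rfl hij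
    · exact main 2 3 0 1 (by linear_combination jac23 G) (by decide)
    · exact main 3 0 1 2 (by linear_combination jac03 G) (by decide)
    · exact main 3 1 0 2 (by linear_combination jac13 G) (by decide)
    · exact main 3 2 0 1 (by linear_combination jac23 G) (by decide)
    · exact absurd rfl hij
  refine ⟨part1, ?_⟩
  -- diagonal cofactors are negative
  have hCneg : ∀ a, C a a < 0 := by
    have key : ∀ x y z : ℝ, x < -1 → y < -1 → z < -1 →
        1 - z * z - x * (x - z * y) + y * (x * z - y) < 0 := by
      intro x y z hx hy hz
      have hab : 1 < x * y := by nlinarith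
      have h2 : x * y * (z + 1) < 0 := mul_neg_of_pos_of_neg (by linarith) (by linarith)
      nlinarith [sq_nonneg (x + y), h2, mul_pos (show (0:ℝ) < 1 - z by linarith)
        (show (0:ℝ) < -1 - z by linarith)]
    intro a
    rw [hC]
    fin_cases a
    · show G.adjugate 0 0 < 0
      rw [adj00 G, hdiagG 1, hdiagG 2, hdiagG 3, hGsym 2 1, hGsym 3 1, hGsym 3 2]
      have := key (G 1 2) (G 1 3) (G 2 3) (hoff 1 2 (by decide)) (hoff 1 3 (by decide))
        (hoff 2 3 (by decide))
      nlinarith [this]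
    · show G.adjugate 1 1 < 0
      rw [adj11 G, hdiagG 0, hdiagG 2, hdiagG 3, hGsym 2 0, hGsym 3 0, hGsym 3 2]
      have := key (G 0 2) (G 0 3) (G 2 3) (hoff 0 2 (by decide)) (hoff 0 3 (by decide))
        (hoff 2 3 (by decide))
      nlinarith [this]
    · show G.adjugate 2 2 < 0
      rw [adj22 G, hdiagG 0, hdiagG 1, hdiagG 3, hGsym 1 0, hGsym 3 0, hGsym 3 1]
      have := key (G 0 1) (G 0 3) (G 1 3) (hoff 0 1 (by decide)) (hoff 0 3 (by decide))
        (hoff 1 3 (by decide))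
      nlinarith [this]
    · show G.adjugate 3 3 < 0
      rw [adj33 G, hdiagG 0, hdiagG 1, hdiagG 2, hGsym 1 0, hGsym 2 0, hGsym 2 1]
      have := key (G 0 1) (G 0 2) (G 1 2) (hoff 0 1 (by decide)) (hoff 0 2 (by decide))
        (hoff 1 2 (by decide))
      nlinarith [this]
  -- part 2
  intro u hu i j hij
  set M : Matrix (Fin 4) (Fin 4) ℝ := V * J with hM
  have hdetM : IsUnit M.det := by
    rw [hM, Matrix.det_mul, hdetJ, mul_one]
    exact isUnit_iff_ne_zero.2 hdetV
  have hbilM : ∀ (x : Fin 4 → ℝ) m, (M *ᵥ x) m = bil (v m) x := by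
    intro x m
    simp [hM, Matrix.mulVec, Matrix.mul_apply, dotProduct, hJ, hV, Matrix.diagonal,
      Fin.sum_univ_four, bil]
    ring
  have hMu : ∀ a, M *ᵥ u a = (bil (u a) (v a)) • (Pi.single a 1 : Fin 4 → ℝ) := by
    intro a
    funext m
    rw [hbilM]
    by_cases hma : m = a
    · subst hma
      simp [Pi.single_apply, bil_symm (v m) (u m)]
    · simp [Pi.single_apply, hma]
      rw [bil_symm]
      exact (hu a).2.2 m hma
  have hu_eq : ∀ a, u a = (bil (u a) (v a)) • (M⁻¹ *ᵥ Pi.single a 1) := by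
    intro a
    have h1 : M⁻¹ *ᵥ (M *ᵥ u a) = u a := by
      rw [Matrix.mulVec_mulVec, Matrix.nonsing_inv_mul M hdetM, Matrix.one_mulVec]
    have h2 := h1.symm
    rw [hMu, Matrix.mulVec_smul] at h2
    exact h2
  have hJJ : J * J = 1 := by
    rw [hJ, Matrix.diagonal_mul_diagonal]
    ext a b
    fin_cases a <;> fin_cases b <;> simp [Matrix.diagonal, Matrix.one_apply] <;> norm_num
  have hMJ : M * J = V := by rw [hM, mul_assoc, hJJ, mul_one]
  have hNV : M⁻¹ * V = J := by
    rw [← hMJ, ← mul_assoc, Matrix.nonsing_inv_mul M hdetM, one_mul]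
  have hJT : Jᵀ = J := by rw [hJ, Matrix.diagonal_transpose]
  have hGinv : G⁻¹ = M⁻¹ᵀ * J * M⁻¹ := by
    apply Matrix.inv_eq_right_inv
    have hVN : Vᵀ * M⁻¹ᵀ = J := by rw [← Matrix.transpose_mul, hNV, hJT]
    calc G * (M⁻¹ᵀ * J * M⁻¹) = (M * Vᵀ) * (M⁻¹ᵀ * J * M⁻¹) := by
          rw [hGVJV]
      _ = M * ((Vᵀ * M⁻¹ᵀ) * J) * M⁻¹ := by simp only [mul_assoc]
      _ = M * M⁻¹ := by rw [hVN, hJJ, mul_one]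
      _ = 1 := Matrix.mul_nonsing_inv M hdetM
  have hxcol : ∀ (a : Fin 4) t, (M⁻¹ *ᵥ Pi.single a 1) t = M⁻¹ t a := by
    intro a t
    simp [Matrix.mulVec, dotProduct, Pi.single_apply]
  have hbilxx : ∀ a b, bil (M⁻¹ *ᵥ Pi.single a 1) (M⁻¹ *ᵥ Pi.single b 1) = G⁻¹ a b := by
    intro a b
    rw [hGinv]
    simp [Matrix.mul_apply, hJ, Matrix.diagonal, Fin.sum_univ_four, bil, hxcol,
      Matrix.transpose_apply]
    ring
  have hbil_smul : ∀ (a b : ℝ) (x y : Fin 4 → ℝ), bil (a • x) (b • y) = a * b * bil x y := by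
    intro a b x y; simp [bil]; ring
  have hbuu : ∀ a b, bil (u a) (u b) = bil (u a) (v a) * bil (u b) (v b) * G⁻¹ a b := by
    intro a b
    conv_lhs => rw [hu_eq a, hu_eq b]
    rw [hbil_smul, hbilxx]
  have hdet0 : G.det ≠ 0 := ne_of_gt hdetG
  have hGi : ∀ a b, G⁻¹ a b = C a b / G.det := by
    intro a b
    rw [Matrix.inv_def, Matrix.smul_apply, Ring.inverse_eq_inv', hC, hadj b a,
      smul_eq_mul, div_eq_inv_mul]
  have hcc : ∀ a, bil (u a) (v a) ^ 2 * (C a a / G.det) = -1 := by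
    intro a
    have h1 : bil (u a) (u a) = bil (u a) (v a) ^ 2 * (C a a / G.det) := by
      rw [hbuu a a, hGi a a]; ring
    have h2 := (hu a).2.1
    rcases (abs_eq (by norm_num : (0:ℝ) ≤ 1)).1 h2 with h3 | h3
    · exfalso
      have hca : C a a / G.det < 0 := div_neg_of_neg_of_pos (hCneg a) hdetG
      have hpos : 0 < bil (u a) (v a) := (hu a).1
      nlinarith [h1, h3, hca, hpos, sq_nonneg (bil (u a) (v a))]
    · rw [← h1, h3]
  -- final computation
  have hp := (hu i).1
  have hq := (hu j).1
  have e1 := hcc i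
  have e2 := hcc j
  have hAB : 0 < C i i * C j j := mul_pos_of_neg_of_neg (hCneg i) (hCneg j)
  have hE := part1 i j hij
  have hx2 : 1 < bil (u i) (u j) ^ 2 := by
    rw [hbuu i j, hGi i j]
    have he1 : bil (u i) (v i) ^ 2 * C i i = -G.det := by
      field_simp at e1; linarith [e1]
    have he2 : bil (u j) (v j) ^ 2 * C j j = -G.det := by
      field_simp at e2; linarith [e2]
    have h3 : bil (u i) (v i) ^ 2 * bil (u j) (v j) ^ 2 * (C i i * C j j) = G.det ^ 2 := by
      linear_combination (bil (u j) (v j) ^ 2 * C j j) * he1 + (-G.det) * he2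
    have hd2 : (0:ℝ) < G.det ^ 2 := by positivity
    rw [show (bil (u i) (v i) * bil (u j) (v j) * (C i j / G.det)) ^ 2
        = bil (u i) (v i) ^ 2 * bil (u j) (v j) ^ 2 * C i j ^ 2 / G.det ^ 2 from by ring,
      lt_div_iff₀ hd2, one_mul]
    nlinarith [h3, hE, mul_pos (mul_pos (pow_pos hp 2) (pow_pos hq 2))
      (sub_pos.2 hE)]
  rcases le_or_gt (bil (u i) (u j)) 0 with h | h
  · left; nlinarith [hx2]
  · right; nlinarith [hx2]
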